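/- For positive reals p ≠ q and nonnegative integer n, the (p,q)-shifted factorial admits the expansion ((a,b);(p,q))_n = ∑_{k=0}^{n} [n choose k]_{p,q} (-1)^k p^{(n-k)(n-k-1)/2} q^{k(k-1)/2} a^{n-k} b^k, where ((a,b);(p,q))_n = ∏_{j=0}^{n-1} (a p^j - b q^j). -/

import Mathlib

/-! Multiplying the expansion for `n` by the new factor `a pⁿ - b qⁿ` and collecting the
coefficient of `a^(n+1-k) b^k` reduces the step `n → n + 1` to the (p,q)-Pascal rule
`[n+1, k+1] = p^(k+1) [n, k+1] + q^(n-k) [n, k]`, which in turn is an identity of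
(p,q)-factorials because
`p^(k+1+m+1) - q^(k+1+m+1) = p^(k+1) (p^(m+1) - q^(m+1)) + q^(m+1) (p^(k+1) - q^(k+1))`. -/

noncomputable def pqFact (p q : ℝ) (n : ℕ) : ℝ :=
  ∏ j ∈ Finset.range n, (p ^ (j + 1) - q ^ (j + 1)) / (p - q)

noncomputable def pqBinom (p q : ℝ) (n k : ℕ) : ℝ :=
  pqFact p q n / (pqFact p q k * pqFact p q (n - k))

noncomputable def pqShifted (a b p q : ℝ) (n : ℕ) : ℝ :=
  ∏ j ∈ Finset.range n, (a * p ^ j - b * q ^ j)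

open Finset

theorem Finset.sum_range_succ_succ_eq_sum_mul_sub {R : Type*} [CommRing R] (f g : ℕ → R)
    (A B : R) (n : ℕ) (h_zero : f 0 = A * g 0) (h_last : f (n + 1) = -(B * g n))
    (h_succ : ∀ k < n, f (k + 1) = A * g (k + 1) - B * g k) :
    ∑ k ∈ range (n + 2), f k = (∑ k ∈ range (n + 1), g k) * (A - B) := by
  have h_mid : ∑ k ∈ range n, f (k + 1) =
      ∑ k ∈ range n, A * g (k + 1) - ∑ k ∈ range n, B * g k := by
    rw [← sum_sub_distrib]
    exact sum_congr rfl fun k hk => h_succ k (mem_range.mp hk)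
  rw [sum_range_succ', sum_range_succ, h_mid, h_last, h_zero, ← mul_sum, ← mul_sum]
  linear_combination B * sum_range_succ g n - A * sum_range_succ' g n

theorem pow_triangle_succ {M : Type*} [Monoid M] (x : M) (m : ℕ) :
    x ^ ((m + 1) * (m + 1 - 1) / 2) = x ^ (m * (m - 1) / 2) * x ^ m := by
  rw [Nat.triangle_succ, pow_add]

theorem pow_succ_sub_pow_succ_ne_zero {p q : ℝ} (hp : 0 ≤ p) (hq : 0 ≤ q) (hne : p ≠ q)
    (m : ℕ) : p ^ (m + 1) - q ^ (m + 1) ≠ 0 :=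
  sub_ne_zero.mpr fun h => hne ((pow_left_inj₀ hp hq m.succ_ne_zero).mp h)

theorem pqFact_succ (p q : ℝ) (n : ℕ) :
    pqFact p q (n + 1) = pqFact p q n * ((p ^ (n + 1) - q ^ (n + 1)) / (p - q)) :=
  prod_range_succ _ n

@[simp]
theorem pqFact_zero (p q : ℝ) : pqFact p q 0 = 1 :=
  prod_range_zero _

theorem pqFact_ne_zero {p q : ℝ} (hp : 0 ≤ p) (hq : 0 ≤ q) (hne : p ≠ q) (n : ℕ) :
    pqFact p q n ≠ 0 :=
  prod_ne_zero_iff.mpr fun j _ =>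
    div_ne_zero (pow_succ_sub_pow_succ_ne_zero hp hq hne j) (sub_ne_zero.mpr hne)

theorem pqBinom_zero_right {p q : ℝ} (hp : 0 ≤ p) (hq : 0 ≤ q) (hne : p ≠ q) (n : ℕ) :
    pqBinom p q n 0 = 1 := by
  rw [pqBinom, pqFact_zero, Nat.sub_zero, one_mul,
    div_self (pqFact_ne_zero hp hq hne n)]

theorem pqBinom_self {p q : ℝ} (hp : 0 ≤ p) (hq : 0 ≤ q) (hne : p ≠ q) (n : ℕ) :
    pqBinom p q n n = 1 := by
  rw [pqBinom, Nat.sub_self, pqFact_zero, mul_one,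
    div_self (pqFact_ne_zero hp hq hne n)]

theorem pqBinom_succ_succ {p q : ℝ} (hp : 0 ≤ p) (hq : 0 ≤ q) (hne : p ≠ q) {n k : ℕ}
    (hk : k < n) :
    pqBinom p q (n + 1) (k + 1) =
      p ^ (k + 1) * pqBinom p q n (k + 1) + q ^ (n - k) * pqBinom p q n k := by
  obtain ⟨m, rfl⟩ : ∃ m, n = k + 1 + m := ⟨n - (k + 1), by omega⟩
  have := pow_succ_sub_pow_succ_ne_zero hp hq hne k
  have := pow_succ_sub_pow_succ_ne_zero hp hq hne m
  have := sub_ne_zero.mpr hne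
  have := pqFact_ne_zero hp hq hne k
  have := pqFact_ne_zero hp hq hne m
  have := pqFact_ne_zero hp hq hne (k + 1 + m)
  rw [pqBinom, pqBinom, pqBinom, show k + 1 + m + 1 - (k + 1) = m + 1 by omega,
    show k + 1 + m - (k + 1) = m by omega, show k + 1 + m - k = m + 1 by omega,
    pqFact_succ p q (k + 1 + m), pqFact_succ p q m, pqFact_succ p q k,
    show k + 1 + m + 1 = (k + 1) + (m + 1) by omega, pow_add p, pow_add q]
  field_simp
  ring

noncomputable def pqShiftedTerm (a b p q : ℝ) (n k : ℕ) : ℝ :=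
  pqBinom p q n k * (-1) ^ k * p ^ ((n - k) * (n - k - 1) / 2) *
    q ^ (k * (k - 1) / 2) * a ^ (n - k) * b ^ k

section pqShiftedTerm

variable {p q : ℝ} (a b : ℝ)

theorem pqShiftedTerm_succ_zero (hp : 0 ≤ p) (hq : 0 ≤ q) (hne : p ≠ q) (n : ℕ) :
    pqShiftedTerm a b p q (n + 1) 0 = a * p ^ n * pqShiftedTerm a b p q n 0 := by
  simp only [pqShiftedTerm, Nat.sub_zero, pqBinom_zero_right hp hq hne, pow_triangle_succ]
  ring

theorem pqShiftedTerm_succ_self (hp : 0 ≤ p) (hq : 0 ≤ q) (hne : p ≠ q) (n : ℕ) :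
    pqShiftedTerm a b p q (n + 1) (n + 1) = -(b * q ^ n * pqShiftedTerm a b p q n n) := by
  simp only [pqShiftedTerm, Nat.sub_self, pqBinom_self hp hq hne, pow_triangle_succ]
  ring

theorem pqShiftedTerm_succ_succ (hp : 0 ≤ p) (hq : 0 ≤ q) (hne : p ≠ q) {n k : ℕ}
    (hk : k < n) :
    pqShiftedTerm a b p q (n + 1) (k + 1) =
      a * p ^ n * pqShiftedTerm a b p q n (k + 1) - b * q ^ n * pqShiftedTerm a b p q n k := by
  rw [pqShiftedTerm, pqBinom_succ_succ hp hq hne hk]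
  obtain ⟨m, rfl⟩ : ∃ m, n = k + 1 + m := ⟨n - (k + 1), by omega⟩
  simp only [pqShiftedTerm, show k + 1 + m + 1 - (k + 1) = m + 1 by omega,
    show k + 1 + m - (k + 1) = m by omega, show k + 1 + m - k = m + 1 by omega,
    pow_triangle_succ, pow_add, pow_succ]
  ring

end pqShiftedTerm

theorem pqShifted_expansion (p q : ℝ) (hp : 0 < p) (hq : 0 < q) (hne : p ≠ q)
    (a b : ℝ) (n : ℕ) :
    pqShifted a b p q n =
      ∑ k ∈ Finset.range (n + 1),
        pqBinom p q n k * (-1) ^ k * p ^ ((n - k) * (n - k - 1) / 2) *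
          q ^ (k * (k - 1) / 2) * a ^ (n - k) * b ^ k := by
  change pqShifted a b p q n = ∑ k ∈ range (n + 1), pqShiftedTerm a b p q n k
  induction n with
  | zero => simp [pqShifted, pqShiftedTerm, pqBinom]
  | succ n ih =>
    rw [pqShifted, prod_range_succ, ← pqShifted, ih]
    exact (sum_range_succ_succ_eq_sum_mul_sub _ _ _ _ n
      (pqShiftedTerm_succ_zero a b hp.le hq.le hne n)
      (pqShiftedTerm_succ_self a b hp.le hq.le hne n)
      fun k hk => pqShiftedTerm_succ_succ a b hp.le hq.le hne hk).symm
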